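/- Under assumptions (A3), (A5), (A6), the single-step error bound holds: P[N(F) ⊄ F | A] ≤ α, where A = {Ŝ^(b) ⊇ S_0 for all b = 1,...,B} is the event that screening succeeds in every split, F is the set of false hypotheses, and N is the successor map of the aggregated sequential procedure. -/

import Mathlib

/-! A rejection outside `F` is a rejection of a true null `C`, whose split p-values are
superuniform by (A3). A union bound over such `C` with (A6) bounds the error by
`(α / B) ∑_b ∑_C ∫ 1{C ∩ Ŝ⁽ᵇ⁾ ≠ ∅} / m_C⁽ᵇ⁾(F)`, and for each split the inner sum of
weights is at most `1` pointwise by (A5). -/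

open MeasureTheory ProbabilityTheory Finset

attribute [local instance] Classical.propDecidable

section UnionBound

variable {Ω ι κ : Type*} [MeasurableSpace Ω] {ν : Measure Ω}

lemma sum_lintegral_le_lintegral_sum (s : Finset ι) (f : ι → Ω → ENNReal) :
    ∑ i ∈ s, ∫⁻ ω, f i ω ∂ν ≤ ∫⁻ ω, ∑ i ∈ s, f i ω ∂ν := by
  induction s using Finset.induction_on with
  | empty => simp
  | insert a s ha ih =>
    simp only [Finset.sum_insert ha]
    exact (add_le_add le_rfl ih).trans (le_lintegral_add _ _)

lemma sum_lintegral_le_one [IsZeroOrProbabilityMeasure ν] (s : Finset ι) (f : ι → Ω → ENNReal)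
    (hf : ∀ ω, ∑ i ∈ s, f i ω ≤ 1) :
    ∑ i ∈ s, ∫⁻ ω, f i ω ∂ν ≤ 1 :=
  calc ∑ i ∈ s, ∫⁻ ω, f i ω ∂ν ≤ ∫⁻ ω, ∑ i ∈ s, f i ω ∂ν := sum_lintegral_le_lintegral_sum s f
    _ ≤ ∫⁻ _, 1 ∂ν := lintegral_mono hf
    _ = ν Set.univ := lintegral_one
    _ ≤ 1 := prob_le_one

lemma measure_biUnion_le_mul_card [IsZeroOrProbabilityMeasure ν] (T : Finset ι) (s : Finset κ)
    (E : ι → Set Ω) (w : ι → κ → Ω → ENNReal) (c : ENNReal)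
    (hE : ∀ i ∈ T, ν (E i) ≤ c * ∑ b ∈ s, ∫⁻ ω, w i b ω ∂ν)
    (hw : ∀ b ∈ s, ∀ ω, ∑ i ∈ T, w i b ω ≤ 1) :
    ν (⋃ i ∈ T, E i) ≤ c * s.card :=
  calc ν (⋃ i ∈ T, E i) ≤ ∑ i ∈ T, ν (E i) := measure_biUnion_finset_le T E
    _ ≤ ∑ i ∈ T, c * ∑ b ∈ s, ∫⁻ ω, w i b ω ∂ν := sum_le_sum hE
    _ = c * ∑ b ∈ s, ∑ i ∈ T, ∫⁻ ω, w i b ω ∂ν := by rw [← mul_sum, sum_comm]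
    _ ≤ c * ∑ _b ∈ s, 1 := by
      gcongr with b hb
      exact sum_lintegral_le_one T (fun i => w i b) (hw b hb)
    _ = c * s.card := by simp

end UnionBound

lemma ENNReal.ofReal_div_natCast_mul_le {x : ℝ} (hx : 0 ≤ x) (n : ℕ) :
    ENNReal.ofReal (x / n) * n ≤ ENNReal.ofReal x := by
  rw [← ENNReal.ofReal_natCast, ← ENNReal.ofReal_mul (by positivity)]
  refine ENNReal.ofReal_le_ofReal ?_
  rcases n.eq_zero_or_pos with rfl | hn
  · simpa using hx
  · rw [div_mul_cancel₀ x (by positivity)]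

theorem stmt16_general {Ω : Type*} [MeasurableSpace Ω] (μ : Measure Ω)
    (p B : ℕ)
    (Cfam : Finset (Finset (Fin p)))
    (S0 : Finset (Fin p))
    (Shat : Fin B → Ω → Finset (Fin p))
    (pv : Finset (Fin p) → Fin B → Ω → ℝ)
    (m : Finset (Fin p) → Fin B → Set (Finset (Fin p)) → Ω → ℝ)
    (aggr : (Fin B → ℝ) → ℝ)
    (α : ℝ) (hα : α ∈ Set.Ioo (0:ℝ) 1)
    (A : Set Ω)
    (F : Set (Finset (Fin p))) (hF : F = {C | C ∈ Cfam ∧ (C ∩ S0).Nonempty})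
    (hm1 : ∀ C b R ω, 1 ≤ m C b R ω)
    -- (A5) single-step property, for every split and rejected collection
    (hA5 : ∀ ω b (R : Set (Finset (Fin p))),
      ∑ C ∈ Cfam, (if C ∉ R ∧ (C ∩ Shat b ω).Nonempty then 1 / m C b R ω else 0) ≤ 1)
    -- (A3) correct testing: on the screening event, p-values of true nulls are superuniform
    (hA3 : ∀ C ∈ Cfam, C ∩ S0 = ∅ → ∀ b, ∀ u ∈ Set.Icc (0:ℝ) 1,
      μ[|A] {ω | pv C b ω ≤ u} ≤ ENNReal.ofReal u)
    -- (A6) aggregation property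
    (hA6 : ∀ C ∈ Cfam, ∀ R : Set (Finset (Fin p)),
      (∀ b, ∀ u ∈ Set.Icc (0:ℝ) 1, μ[|A] {ω | pv C b ω ≤ u} ≤ ENNReal.ofReal u) →
      ∀ u ∈ Set.Icc (0:ℝ) 1,
        μ[|A] {ω | aggr (fun b => pv C b ω * m C b R ω) ≤ u}
          ≤ ENNReal.ofReal (u / B) *
              ∑ b, ∫⁻ ω, ENNReal.ofReal
                (if (C ∩ Shat b ω).Nonempty then 1 / m C b R ω else 0) ∂(μ[|A])) :
    μ[|A] {ω | ¬ ({C | C ∈ Cfam ∧ C ∉ F ∧ aggr (fun b => pv C b ω * m C b F ω) ≤ α} ⊆ F)}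
      ≤ ENNReal.ofReal α := by
  set T := Cfam.filter (· ∉ F)
  have hnull : ∀ C ∈ T, C ∩ S0 = ∅ := fun C hC => by
    rw [mem_filter, hF] at hC
    by_contra h
    exact hC.2 ⟨hC.1, nonempty_iff_ne_empty.2 h⟩
  have hsub : {ω | ¬ ({C | C ∈ Cfam ∧ C ∉ F ∧ aggr (fun b => pv C b ω * m C b F ω) ≤ α} ⊆ F)}
      ⊆ ⋃ C ∈ T, {ω | aggr (fun b => pv C b ω * m C b F ω) ≤ α} := by
    intro ω hω
    obtain ⟨C, ⟨hC, hCF, hrej⟩, -⟩ := Set.not_subset.1 hω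
    exact Set.mem_biUnion (mem_filter.2 ⟨hC, hCF⟩) hrej
  have hweights : ∀ b ω, ∑ C ∈ T,
      ENNReal.ofReal (if (C ∩ Shat b ω).Nonempty then 1 / m C b F ω else 0) ≤ 1 := by
    intro b ω
    rw [← ENNReal.ofReal_sum_of_nonneg fun C _ => by
      split_ifs
      exacts [one_div_nonneg.2 (zero_le_one.trans (hm1 C b F ω)), le_rfl]]
    refine ENNReal.ofReal_le_one.2 ?_
    simpa only [T, sum_filter, ite_and] using hA5 ω b F
  calc _ ≤ μ[|A] (⋃ C ∈ T, {ω | aggr (fun b => pv C b ω * m C b F ω) ≤ α}) :=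
        measure_mono hsub
    _ ≤ ENNReal.ofReal (α / B) * (univ : Finset (Fin B)).card :=
        measure_biUnion_le_mul_card T univ _ _ _
          (fun C hC => hA6 C (mem_filter.1 hC).1 F (hA3 C (mem_filter.1 hC).1 (hnull C hC))
            α ⟨hα.1.le, hα.2.le⟩)
          (fun b _ ω => hweights b ω)
    _ ≤ ENNReal.ofReal α := by
        simpa using ENNReal.ofReal_div_natCast_mul_le hα.1.le B

/-- the single-step error bound `P[N(F) ⊄ F | A] ≤ α` for the
aggregated multi sample-splitting procedure, under the correct testing property (A3)
(superuniform p-values for true nulls, on the screening event `A`), the single-step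
property (A5) of the multiplicity adjustments, and the aggregation property (A6). -/
theorem stmt16 {Ω : Type*} [MeasurableSpace Ω] (μ : Measure Ω) [IsProbabilityMeasure μ]
    (p B : ℕ) (hB : 0 < B)
    (Cfam : Finset (Finset (Fin p)))
    (S0 : Finset (Fin p))
    (Shat : Fin B → Ω → Finset (Fin p))
    (pv : Finset (Fin p) → Fin B → Ω → ℝ)
    (m : Finset (Fin p) → Fin B → Set (Finset (Fin p)) → Ω → ℝ)
    (aggr : (Fin B → ℝ) → ℝ)
    (α : ℝ) (hα : α ∈ Set.Ioo (0:ℝ) 1)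
    (A : Set Ω) (hA : A = {ω | ∀ b, S0 ⊆ Shat b ω})
    (F : Set (Finset (Fin p))) (hF : F = {C | C ∈ Cfam ∧ (C ∩ S0).Nonempty})
    (hm1 : ∀ C b R ω, 1 ≤ m C b R ω)
    -- (A5) single-step property, for every split and rejected collection
    (hA5 : ∀ ω b (R : Set (Finset (Fin p))),
      ∑ C ∈ Cfam, (if C ∉ R ∧ (C ∩ Shat b ω).Nonempty then 1 / m C b R ω else 0) ≤ 1)
    -- (A3) correct testing: on the screening event, p-values of true nulls are superuniform
    (hA3 : ∀ C ∈ Cfam, C ∩ S0 = ∅ → ∀ b, ∀ u ∈ Set.Icc (0:ℝ) 1,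
      μ[|A] {ω | pv C b ω ≤ u} ≤ ENNReal.ofReal u)
    -- (A6) aggregation property
    (hA6 : ∀ C ∈ Cfam, ∀ R : Set (Finset (Fin p)),
      (∀ b, ∀ u ∈ Set.Icc (0:ℝ) 1, μ[|A] {ω | pv C b ω ≤ u} ≤ ENNReal.ofReal u) →
      ∀ u ∈ Set.Icc (0:ℝ) 1,
        μ[|A] {ω | aggr (fun b => pv C b ω * m C b R ω) ≤ u}
          ≤ ENNReal.ofReal (u / B) *
              ∑ b, ∫⁻ ω, ENNReal.ofReal
                (if (C ∩ Shat b ω).Nonempty then 1 / m C b R ω else 0) ∂(μ[|A])) :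
    μ[|A] {ω | ¬ ({C | C ∈ Cfam ∧ C ∉ F ∧ aggr (fun b => pv C b ω * m C b F ω) ≤ α} ⊆ F)}
      ≤ ENNReal.ofReal α :=
  stmt16_general μ p B Cfam S0 Shat pv m aggr α hα A F hF hm1 hA5 hA3 hA6
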